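/- arXiv:1907.05773 — 2 statements merged into one kernel-verified Lean document; each statement's English description precedes it below -/
import Mathlib

section
/- For n ≥ 1, the vectors y^n defined by y^n_i = (-1)^{n+i}(n+1) C(n+1,i), 0 ≤ i ≤ n, satisfy the recurrence y^n = (2n+1) Π(L^n) + E^{n-1,n} y^{n-1}, where Π(L^n)_i = (-1)^{n+i} C(n,i). -/
/-- The degree elevation matrix `E^{m,m+1}` (out-of-range binomials are zero). -/
noncomputable def elev1 (m : ℕ) : Matrix (Fin (m + 2)) (Fin (m + 1)) ℝ :=
  fun i j =>
    if (j : ℕ) ≤ (i : ℕ) then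
      (m.choose j : ℝ) * ((Nat.choose 1 ((i : ℕ) - (j : ℕ))) : ℝ) / ((m + 1).choose i : ℝ)
    else 0

/-- The vector `y^n`, `y^n_i = (-1)^{n+i} (n+1) C(n+1,i)`. -/
noncomputable def yvec (n : ℕ) : Fin (n + 1) → ℝ :=
  fun i => (-1 : ℝ) ^ (n + (i : ℕ)) * ((n : ℝ) + 1) * ((n + 1).choose i : ℝ)

/-- Bernstein coefficient vector of the degree-`n` shifted Legendre polynomial. -/
noncomputable def legCoeff (n : ℕ) : Fin (n + 1) → ℝ :=
  fun i => (-1 : ℝ) ^ (n + (i : ℕ)) * (n.choose i : ℝ)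

/-- for `n = m+1 ≥ 1`, `y^n = (2n+1) Π(L^n) + E^{n-1,n} y^{n-1}`. -/
theorem yvec_recurrence (m : ℕ) :
    yvec (m + 1) =
      (2 * ((m : ℝ) + 1) + 1) • legCoeff (m + 1) + (elev1 m).mulVec (yvec m) := by
  funext i
  obtain ⟨v, hv⟩ := i
  simp only [Pi.add_apply, Pi.smul_apply, smul_eq_mul, Matrix.mulVec, dotProduct,
    yvec, legCoeff, elev1]
  rcases v with _ | k
  · -- v = 0
    rw [Finset.sum_eq_single (⟨0, by omega⟩ : Fin (m + 1))]
    · norm_num [pow_succ]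
      ring
    · intro b _ hb
      have hb0 : ¬ ((b : ℕ) ≤ 0) := by
        intro h
        exact hb (by ext; simpa using h)
      simp [hb0]
    · simp
  · by_cases hk : k + 1 ≤ m
    · obtain ⟨d, rfl⟩ : ∃ d, m = k + 1 + d := ⟨m - (k + 1), by omega⟩
      rw [Finset.sum_eq_add (⟨k + 1, by omega⟩ : Fin (k + 1 + d + 1))
        (⟨k, by omega⟩ : Fin (k + 1 + d + 1)) (by simp [Fin.ext_iff])]
      · norm_num
        have hX : (((k + 1 + d + 1).choose (k + 1) : ℕ) : ℝ) ≠ 0 := by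
          exact_mod_cast Nat.choose_pos (by omega : k + 1 ≤ k + 1 + d + 1) |>.ne'
        have h1 : (-1 : ℝ) ^ (k + 1 + d + 1 + (k + 1)) = -(-1 : ℝ) ^ d := by
          rw [show k + 1 + d + 1 + (k + 1) = 2 * (k + 1) + (d + 1) by ring, pow_add, pow_mul]
          norm_num [pow_succ]
        have h2 : (-1 : ℝ) ^ (k + 1 + d + (k + 1)) = (-1 : ℝ) ^ d := by
          rw [show k + 1 + d + (k + 1) = 2 * (k + 1) + d by ring, pow_add, pow_mul]
          norm_num
        have h3 : (-1 : ℝ) ^ (k + 1 + d + k) = -(-1 : ℝ) ^ d := by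
          rw [show k + 1 + d + k = 2 * k + (d + 1) by ring, pow_add, pow_mul]
          norm_num [pow_succ]
        have hc1 : (((k + 1 + d + 1 + 1).choose (k + 1) : ℕ) : ℝ)
            = ((k + 1 + d + 1).choose k : ℝ) + ((k + 1 + d + 1).choose (k + 1) : ℝ) := by
          exact_mod_cast congrArg (Nat.cast : ℕ → ℝ) (Nat.choose_succ_succ' (k + 1 + d + 1) k)
        have hc2 : ((k + 1 + d).choose (k + 1) : ℝ) * ((k : ℝ) + 1 + d + 1)
            = ((k + 1 + d + 1).choose (k + 1) : ℝ) * ((d : ℝ) + 1) := by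
          have := Nat.choose_mul_succ_eq (k + 1 + d) (k + 1)
          have h' : (k + 1 + d).choose (k + 1) * (k + 1 + d + 1)
              = (k + 1 + d + 1).choose (k + 1) * (d + 1) := by
            rw [this]; congr 1; omega
          exact_mod_cast h'
        have hc3 : ((k : ℝ) + 1 + d + 1) * ((k + 1 + d).choose k : ℝ)
            = ((k + 1 + d + 1).choose (k + 1) : ℝ) * ((k : ℝ) + 1) := by
          exact_mod_cast Nat.add_one_mul_choose_eq (k + 1 + d) k
        have hc4 : ((k + 1 + d + 1).choose (k + 1) : ℝ) * ((k : ℝ) + 1)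
            = ((k + 1 + d + 1).choose k : ℝ) * ((d : ℝ) + 2) := by
          have := Nat.choose_succ_right_eq (k + 1 + d + 1) k
          have h' : (k + 1 + d + 1).choose (k + 1) * (k + 1)
              = (k + 1 + d + 1).choose k * (d + 2) := by
            rw [this]; congr 1; omega
          exact_mod_cast h'
        rw [h1, h2, h3, hc1]
        field_simp
        linear_combination
          (-(((k + 1 + d + 1).choose (k + 1) : ℕ) : ℝ)) * hc2 +
          ((((k + 1 + d + 1).choose k : ℕ) : ℝ)) * hc3 +
          ((((k + 1 + d + 1).choose (k + 1) : ℕ) : ℝ)) * hc4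
      · intro c _ hc
        rcases Nat.lt_or_ge (c : ℕ) k with h | h
        · simp [Nat.choose_eq_zero_of_lt (show 1 < k + 1 - (c : ℕ) by omega)]
        · have hcle : ¬ ((c : ℕ) ≤ k + 1) := by
            rcases hc with ⟨h1, h2⟩
            have h1' : (c : ℕ) ≠ k + 1 := fun hh => h1 (by ext; simpa using hh)
            have h2' : (c : ℕ) ≠ k := fun hh => h2 (by ext; simpa using hh)
            omega
          simp [hcle]
      · simp
      · simp
    · have hkm : k = m := by omega
      subst hkm
      rw [Finset.sum_eq_single (⟨k, by omega⟩ : Fin (k + 1))]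
      · norm_num
        ring
      · intro b _ hb
        have hbk : (b : ℕ) < k := by
          have := b.isLt
          rcases Nat.lt_or_ge (b : ℕ) k with h | h
          · exact h
          · exact absurd (by ext; simp; omega) hb
        have h2 : 1 < k + 1 - (b : ℕ) := by omega
        simp [Nat.choose_eq_zero_of_lt h2]
      · simp
end

section
/- The last column of the inverse of the Bernstein mass matrix is given explicitly: M^n y^n = e^n, where y^n_i = (-1)^{n+i}(n+1) C(n+1,i) and e^n is the standard basis vector with 1 in position n and 0 elsewhere. -/
open Polynomial Finset fwdDiff

/-- The Bernstein mass matrix `M^n` (exact entries). -/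
noncomputable def bmass (n : ℕ) : Matrix (Fin (n + 1)) (Fin (n + 1)) ℝ :=
  fun i j =>
    (n.choose i : ℝ) * (n.choose j : ℝ) *
      (Nat.factorial (2 * n - (i : ℕ) - (j : ℕ)) : ℝ) *
        (Nat.factorial ((i : ℕ) + (j : ℕ)) : ℝ) / (Nat.factorial (2 * n + 1) : ℝ)

private lemma fwdDiff_iter_zero_fun (m : ℕ) :
    (Δ_[(1:ℕ)])^[m] (fun _ : ℕ => (0:ℝ)) = fun _ => 0 := by
  induction m with
  | zero => rfl
  | succ m ih => rw [Function.iterate_succ_apply]; simpa [fwdDiff] using ih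

private lemma fwdDiff_iter_poly : ∀ (m : ℕ) (P : ℝ[X]), P.natDegree < m →
    (Δ_[(1:ℕ)])^[m] (fun j : ℕ => P.eval (j:ℝ)) = fun _ => 0 := by
  intro m
  induction m with
  | zero => intro P hP; exact absurd hP (Nat.not_lt_zero _)
  | succ m ih =>
    intro P hP
    rw [Function.iterate_succ_apply]
    set Q : ℝ[X] := P.comp (X + C 1) - P with hQ
    have hQeval : Δ_[(1:ℕ)] (fun j : ℕ => P.eval (j:ℝ)) = fun j : ℕ => Q.eval (j:ℝ) := by
      funext j
      simp only [fwdDiff, hQ, Polynomial.eval_sub, Polynomial.eval_comp, Polynomial.eval_add,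
        Polynomial.eval_X, Polynomial.eval_C]
      push_cast
      ring_nf
    rw [hQeval]
    by_cases hQ0 : Q = 0
    · rw [hQ0]
      simpa using fwdDiff_iter_zero_fun m
    · have hPd : P.natDegree ≠ 0 := by
        intro h0
        apply hQ0
        rw [hQ, Polynomial.eq_C_of_natDegree_eq_zero h0]
        simp
      have hP0 : P ≠ 0 := fun h => hPd (by simp [h])
      have hc0 : P.comp (X + C 1) ≠ 0 := by
        intro h
        have h2 := Polynomial.natDegree_comp (p := P) (q := X + C (1:ℝ))
        rw [h, Polynomial.natDegree_X_add_C, mul_one, Polynomial.natDegree_zero] at h2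
        exact hPd h2.symm
      have hdeg : (P.comp (X + C 1)).degree = P.degree := by
        rw [Polynomial.degree_eq_natDegree hc0, Polynomial.degree_eq_natDegree hP0,
          Polynomial.natDegree_comp, Polynomial.natDegree_X_add_C, mul_one]
      have hlc : (P.comp (X + C 1)).leadingCoeff = P.leadingCoeff := by
        rw [Polynomial.leadingCoeff_comp
            (by rw [Polynomial.natDegree_X_add_C]; exact one_ne_zero),
          Polynomial.leadingCoeff_X_add_C, one_pow, mul_one]
      have hdlt : Q.degree < P.degree := by
        have := Polynomial.degree_sub_lt hdeg hc0 hlc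
        rwa [hdeg] at this
      have hnd : Q.natDegree < P.natDegree :=
        Polynomial.natDegree_lt_natDegree hQ0 hdlt
      exact ih Q (lt_of_lt_of_le hnd (Nat.lt_succ_iff.mp hP))

private lemma alt_sum_poly (n : ℕ) (P : ℝ[X]) (h : P.natDegree ≤ n) :
    ∑ j ∈ range (n+1), (-1:ℝ)^(n+j) * ((n+1).choose j : ℝ) * P.eval (j:ℝ)
      = P.eval ((n+1 : ℕ) : ℝ) := by
  have h0 := congrFun (fwdDiff_iter_poly (n+1) P (Nat.lt_succ_of_le h)) 0
  rw [fwdDiff_iter_eq_sum_shift] at h0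
  simp only [zero_add, smul_eq_mul, zsmul_eq_mul, Int.cast_mul, Int.cast_pow, Int.cast_neg,
    Int.cast_one, Int.cast_natCast] at h0
  rw [Finset.sum_range_succ] at h0
  simp only [Nat.sub_self, pow_zero, Nat.choose_self, Nat.cast_one, one_mul, mul_one] at h0
  have hsgn : ∀ k ∈ range (n+1),
      (-1:ℝ)^(n+1-k) * ((n+1).choose k : ℝ) * P.eval ((k:ℕ) : ℝ)
        = -((-1:ℝ)^(n+k) * ((n+1).choose k : ℝ) * P.eval ((k:ℕ) : ℝ)) := by
    intro k hk
    have hk' : k ≤ n := Nat.lt_succ_iff.mp (Finset.mem_range.mp hk)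
    obtain ⟨d, rfl⟩ : ∃ d, n = k + d := ⟨n - k, by omega⟩
    have e1 : k + d + 1 - k = d + 1 := by omega
    have e2 : k + d + k = 2*k + d := by omega
    rw [e1, e2]
    simp only [pow_add, pow_mul, pow_succ, neg_one_sq, one_pow, one_mul]
    ring
  rw [Finset.sum_congr rfl hsgn, Finset.sum_neg_distrib] at h0
  linarith [h0]

private lemma prod_asc (i : ℕ) : ∀ x : ℕ,
    ∏ k ∈ range i, ((x:ℝ) + ((k:ℝ)+1)) = (Nat.factorial (i+x) : ℝ) / (Nat.factorial x : ℝ) := by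
  induction i with
  | zero => intro x; simp [div_self (Nat.cast_ne_zero.mpr (Nat.factorial_ne_zero x) : (Nat.factorial x:ℝ) ≠ 0)]
  | succ i ih =>
    intro x
    rw [Finset.prod_range_succ, ih]
    have hx : (Nat.factorial x : ℝ) ≠ 0 := Nat.cast_ne_zero.mpr (Nat.factorial_ne_zero x)
    have h1 : Nat.factorial (i+1+x) = (i+x+1) * Nat.factorial (i+x) := by
      rw [show i+1+x = (i+x)+1 by omega, Nat.factorial_succ]
    rw [h1]
    push_cast
    field_simp
    ring

private lemma prod_desc : ∀ (m q : ℕ), m ≤ q →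
    ∏ k ∈ range m, ((q:ℝ) - (k:ℝ)) = (Nat.factorial q : ℝ) / (Nat.factorial (q - m) : ℝ) := by
  intro m
  induction m with
  | zero => intro q _; simp [div_self (Nat.cast_ne_zero.mpr (Nat.factorial_ne_zero q) : (Nat.factorial q:ℝ) ≠ 0)]
  | succ m ih =>
    intro q hq
    rw [Finset.prod_range_succ, ih q (by omega)]
    have h1 : q - m = (q - (m+1)) + 1 := by omega
    have h2 : Nat.factorial (q - m) = (q - (m+1) + 1) * Nat.factorial (q - (m+1)) := by
      rw [h1, Nat.factorial_succ]
    have h3 : ((q - (m+1) + 1 : ℕ) : ℝ) = (q:ℝ) - (m:ℝ) := by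
      rw [h1.symm]
      push_cast [Nat.cast_sub (by omega : m ≤ q)]
      ring
    have hne : (Nat.factorial (q - (m+1)) : ℝ) ≠ 0 := Nat.cast_ne_zero.mpr (Nat.factorial_ne_zero _)
    have hne2 : (q:ℝ) - (m:ℝ) ≠ 0 := by
      have : (m:ℝ) < (q:ℝ) := by exact_mod_cast (by omega : m < q)
      linarith
    rw [h2, Nat.cast_mul, h3]
    field_simp

/-- `M^n y^n = e^n` where `y^n_i = (-1)^{n+i}(n+1) C(n+1,i)` and `e^n`
is the last standard basis vector; i.e. `y^n` is the last column of `(M^n)⁻¹`. -/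
theorem bernstein_mass_last_column (n : ℕ) :
    (bmass n).mulVec
        (fun i : Fin (n + 1) =>
          (-1 : ℝ) ^ (n + (i : ℕ)) * ((n : ℝ) + 1) * ((n + 1).choose i : ℝ)) =
      Pi.single (Fin.last n) 1 := by
  funext i
  set i' : ℕ := (i : ℕ) with hi'
  have hin : i' ≤ n := Nat.lt_succ_iff.mp i.isLt
  set P : ℝ[X] := (∏ k ∈ range i', (X + C ((k:ℝ)+1))) *
      (∏ k ∈ range (n - i'), (C (((2*n - i' : ℕ) : ℝ) - (k:ℝ)) - X)) with hP
  have hfne : ∀ m : ℕ, (Nat.factorial m : ℝ) ≠ 0 :=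
    fun m => Nat.cast_ne_zero.mpr (Nat.factorial_ne_zero m)
  have hPdeg : P.natDegree ≤ n := by
    have d1 : (∏ k ∈ range i', (X + C ((k:ℝ)+1))).natDegree ≤ i' := by
      refine le_trans (Polynomial.natDegree_prod_le _ _) (le_trans
        (Finset.sum_le_sum (fun k _ => le_of_eq (Polynomial.natDegree_X_add_C ((k:ℝ)+1)))) ?_)
      simp
    have d2 : (∏ k ∈ range (n - i'), (C (((2*n - i' : ℕ) : ℝ) - (k:ℝ)) - X)).natDegree
        ≤ n - i' := by
      have hone : ∀ k : ℕ,
          (C (((2*n - i' : ℕ) : ℝ) - (k:ℝ)) - X).natDegree = 1 := by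
        intro k
        rw [show (C (((2*n - i' : ℕ) : ℝ) - (k:ℝ)) - X)
            = -(X - C (((2*n - i' : ℕ) : ℝ) - (k:ℝ))) by ring,
          Polynomial.natDegree_neg, Polynomial.natDegree_X_sub_C]
      refine le_trans (Polynomial.natDegree_prod_le _ _) (le_trans
        (Finset.sum_le_sum (fun k _ => le_of_eq (hone k))) ?_)
      simp
    calc P.natDegree ≤ _ + _ := Polynomial.natDegree_mul_le
      _ ≤ i' + (n - i') := add_le_add d1 d2
      _ ≤ n := by omega
  have hPeval : ∀ j : ℕ, j ≤ n → P.eval (j:ℝ)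
      = ((Nat.factorial (i'+j) : ℝ) / (Nat.factorial j : ℝ)) *
        ((Nat.factorial (2*n - i' - j) : ℝ) / (Nat.factorial (n - j) : ℝ)) := by
    intro j hj
    rw [hP]
    simp only [Polynomial.eval_mul, Polynomial.eval_prod, Polynomial.eval_add,
      Polynomial.eval_sub, Polynomial.eval_X, Polynomial.eval_C]
    have e2 : ∏ k ∈ range (n - i'), ((((2*n - i' : ℕ) : ℝ) - (k:ℝ)) - (j:ℝ))
        = (Nat.factorial (2*n - i' - j) : ℝ) / (Nat.factorial (n - j) : ℝ) := by
      have hc : ∀ k ∈ range (n - i'),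
          (((2*n - i' : ℕ) : ℝ) - (k:ℝ)) - (j:ℝ) = ((2*n - i' - j : ℕ) : ℝ) - (k:ℝ) := by
        intro k _
        have hcast : ((2*n - i' : ℕ) : ℝ) = ((2*n - i' - j : ℕ) : ℝ) + (j:ℝ) := by
          exact_mod_cast congrArg (Nat.cast (R := ℝ))
            (by omega : 2*n - i' = (2*n - i' - j) + j)
        rw [hcast]; ring
      rw [Finset.prod_congr rfl hc, prod_desc (n - i') (2*n - i' - j) (by omega),
        show 2*n - i' - j - (n - i') = n - j from by omega]
    rw [prod_asc i' j, e2]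
  -- rewrite the row sum
  set c : ℝ := ((n:ℝ)+1) * (Nat.factorial n : ℝ) * (Nat.factorial n : ℝ) /
      ((Nat.factorial (2*n+1) : ℝ) * (Nat.factorial i' : ℝ) * (Nat.factorial (n - i') : ℝ))
      with hc
  have key : (bmass n).mulVec
      (fun j : Fin (n + 1) =>
        (-1 : ℝ) ^ (n + (j : ℕ)) * ((n : ℝ) + 1) * ((n + 1).choose j : ℝ)) i
      = c * P.eval ((n+1 : ℕ) : ℝ) := by
    simp only [Matrix.mulVec, dotProduct]
    rw [← alt_sum_poly n P hPdeg, Finset.mul_sum,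
      ← Fin.sum_univ_eq_sum_range (fun j =>
        c * ((-1:ℝ)^(n+j) * ((n+1).choose j : ℝ) * P.eval (j:ℝ))) (n+1)]
    refine Finset.sum_congr rfl (fun j _ => ?_)
    have hjn : (j:ℕ) ≤ n := Nat.lt_succ_iff.mp j.isLt
    simp only [bmass]
    rw [hPeval j hjn]
    have h1 : ((n.choose i' : ℕ) : ℝ)
        = (Nat.factorial n : ℝ) / ((Nat.factorial i' : ℝ) * (Nat.factorial (n - i') : ℝ)) := by
      rw [eq_div_iff (by positivity)]
      exact_mod_cast congrArg (Nat.cast (R := ℝ))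
        (by rw [← Nat.choose_mul_factorial_mul_factorial hin]; ring)
    have h2 : ((n.choose (j:ℕ) : ℕ) : ℝ)
        = (Nat.factorial n : ℝ) /
            ((Nat.factorial (j:ℕ) : ℝ) * (Nat.factorial (n - (j:ℕ)) : ℝ)) := by
      rw [eq_div_iff (by positivity)]
      exact_mod_cast congrArg (Nat.cast (R := ℝ))
        (by rw [← Nat.choose_mul_factorial_mul_factorial hjn]; ring)
    rw [← hi', h1, h2, hc]
    field_simp
  rw [key]
  by_cases hi : i' = n
  · have hilast : i = Fin.last n := by
      apply Fin.ext; rw [Fin.val_last, ← hi', hi]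
    rw [hilast, Pi.single_eq_same]
    have hev : P.eval ((n+1 : ℕ) : ℝ)
        = (Nat.factorial (2*n+1) : ℝ) / (Nat.factorial (n+1) : ℝ) := by
      rw [hP, hi]
      simp only [Nat.sub_self, Finset.range_zero, Finset.prod_empty, mul_one,
        Polynomial.eval_prod, Polynomial.eval_add, Polynomial.eval_X, Polynomial.eval_C]
      rw [prod_asc n (n+1), show n + (n+1) = 2*n+1 from by omega]
    rw [hev, hc, hi]
    have h3 : Nat.factorial (n+1) = (n+1) * Nat.factorial n := Nat.factorial_succ n
    rw [h3]
    simp only [Nat.sub_self, Nat.factorial_zero, Nat.cast_one, mul_one]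
    push_cast
    field_simp
  · have hlt : i' < n := lt_of_le_of_ne hin hi
    have hilast : i ≠ Fin.last n := by
      intro h; apply hi; rw [hi', h, Fin.val_last]
    rw [Pi.single_eq_of_ne hilast]
    have hev : P.eval ((n+1 : ℕ) : ℝ) = 0 := by
      rw [hP]
      simp only [Polynomial.eval_mul, Polynomial.eval_prod, Polynomial.eval_add,
        Polynomial.eval_sub, Polynomial.eval_X, Polynomial.eval_C]
      have : ∏ k ∈ range (n - i'), ((((2*n - i' : ℕ) : ℝ) - (k:ℝ)) - ((n+1 : ℕ):ℝ)) = 0 := by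
        apply Finset.prod_eq_zero (i := n - i' - 1) (Finset.mem_range.mpr (by omega))
        have c1 : ((2*n - i' : ℕ) : ℝ) = 2*(n:ℝ) - (i':ℝ) := by
          push_cast [Nat.cast_sub (by omega : i' ≤ 2*n)]; ring
        have c2 : ((n - i' - 1 : ℕ) : ℝ) = (n:ℝ) - (i':ℝ) - 1 := by
          rw [show n - i' - 1 = n - (i'+1) from by omega,
            Nat.cast_sub (by omega : i' + 1 ≤ n)]
          push_cast
          ring
        rw [c1, c2]
        push_cast
        ring
      rw [this, mul_zero]
    rw [hev, mul_zero]
end
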